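/- Let φ_ρ be the Laplace transform of the martingale limit W_ρ of the branching process with offspring distribution 1+Poisson(2ρ), ρ > 0, and φ_e(θ) = (1+θ)^{-1}. Then sup_{θ>0} θ^{-2}|φ_ρ(θ) − φ_e(θ)| ≤ ρ/(1+2ρ). -/

import Mathlib

open MeasureTheory ProbabilityTheory

/-!
The generating function of `M (n + 1)` is that of `M n` composed with the offspring generating
function `f s = s e^{2ρ(s-1)}`, so `E[u ^ M n] = f^[n] u`, and by dominated convergence
`E[e^{-θW}] = lim f^[n] (e^{-θ/(1+2ρ)^n})`. On `[0, 1]` the map `f` is `(1 + 2ρ)`-Lipschitz, and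
`φ_e θ = (1 + θ)⁻¹` solves the Poincaré equation `φ((1 + 2ρ)θ) = f(φ θ)` up to an error
`2ρ²θ²/(1+2ρ)²`, while `|e^{-θ} - φ_e θ| ≤ θ²/2`. Hence the `n`-th approximation is within
`((1+2ρ)^{-n}/2 + ρ/(1+2ρ)) θ²` of `φ_e θ`, and `n → ∞` gives the bound.
-/

open Set Real Filter Topology
open scoped NNReal ENNReal

theorem exp_neg_le_inv_one_add {x : ℝ} (hx : 0 ≤ x) : exp (-x) ≤ (1 + x)⁻¹ := by
  rw [exp_neg]
  exact inv_anti₀ (by linarith) (by linarith [add_one_le_exp x])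

theorem inv_one_add_sub_exp_neg_le {x : ℝ} (hx : 0 ≤ x) : (1 + x)⁻¹ - exp (-x) ≤ x ^ 2 / 2 := by
  rcases lt_or_ge x 2 with hx2 | hx2
  · have hpade : (2 - x) / (2 + x) ≤ exp (-x) := by
      rw [exp_neg, ← inv_div]
      exact inv_anti₀ (exp_pos x) (exp_le_two_add_div_two_sub hx hx2)
    have hsub : (1 + x)⁻¹ - (2 - x) / (2 + x) = x ^ 2 / ((1 + x) * (2 + x)) := by
      field_simp
      ring
    have hden : x ^ 2 / ((1 + x) * (2 + x)) ≤ x ^ 2 / 2 :=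
      div_le_div_of_nonneg_left (by positivity) two_pos (by nlinarith)
    linarith
  · have : (1 + x)⁻¹ ≤ 1 := inv_le_one_of_one_le₀ (by linarith)
    nlinarith [exp_pos (-x)]

theorem abs_exp_neg_sub_inv_one_add_le {x : ℝ} (hx : 0 ≤ x) :
    |exp (-x) - (1 + x)⁻¹| ≤ x ^ 2 / 2 := by
  rw [abs_sub_comm, abs_of_nonneg (sub_nonneg.2 (exp_neg_le_inv_one_add hx))]
  exact inv_one_add_sub_exp_neg_le hx

noncomputable def succPoissonPgf (r s : ℝ) : ℝ := s * exp (r * (s - 1))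

theorem mapsTo_succPoissonPgf_Ici (r : ℝ) : MapsTo (succPoissonPgf r) (Ici 0) (Ici 0) :=
  fun _ hs => mul_nonneg hs (exp_pos _).le

theorem mapsTo_succPoissonPgf_Icc {r : ℝ} (hr : 0 ≤ r) :
    MapsTo (succPoissonPgf r) (Icc 0 1) (Icc 0 1) := fun s ⟨hs0, hs1⟩ =>
  ⟨mapsTo_succPoissonPgf_Ici r hs0,
    mul_le_one₀ hs1 (exp_pos _).le
      (exp_le_one_iff.2 (mul_nonpos_of_nonneg_of_nonpos hr (by linarith)))⟩

theorem hasDerivAt_succPoissonPgf (r s : ℝ) :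
    HasDerivAt (succPoissonPgf r) (exp (r * (s - 1)) * (1 + r * s)) s := by
  have h : HasDerivAt (fun s => s * exp (r * (s - 1)))
      (1 * exp (r * (s - 1)) + s * (exp (r * (s - 1)) * (r * 1))) s :=
    (hasDerivAt_id' s).mul (((hasDerivAt_id' s).sub_const 1).const_mul r).exp
  exact h.congr_deriv (by ring)

theorem abs_succPoissonPgf_sub_le {r a b : ℝ} (hr : 0 ≤ r) (ha : a ∈ Icc (0 : ℝ) 1)
    (hb : b ∈ Icc (0 : ℝ) 1) :
    |succPoissonPgf r a - succPoissonPgf r b| ≤ (1 + r) * |a - b| := by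
  have hderiv : ∀ s ∈ Icc (0 : ℝ) 1, ‖exp (r * (s - 1)) * (1 + r * s)‖ ≤ 1 + r := by
    rintro s ⟨hs0, hs1⟩
    have hexp : exp (r * (s - 1)) ≤ 1 := exp_le_one_iff.2 (by nlinarith)
    rw [Real.norm_eq_abs, abs_of_nonneg (by positivity)]
    calc exp (r * (s - 1)) * (1 + r * s) ≤ 1 * (1 + r * 1) := by gcongr
      _ = 1 + r := by ring
  simpa only [Real.norm_eq_abs] using
    (convex_Icc (0 : ℝ) 1).norm_image_sub_le_of_norm_hasDerivWithin_le
      (fun s _ => (hasDerivAt_succPoissonPgf r s).hasDerivWithinAt) hderiv hb ha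

theorem abs_succPoissonPgf_inv_one_add_sub_le {r u : ℝ} (hr : 0 ≤ r) (hu : 0 ≤ u) :
    |succPoissonPgf r (1 + u)⁻¹ - (1 + (1 + r) * u)⁻¹| ≤ (r * u) ^ 2 / 2 := by
  set x := r * u / (1 + u) with hx
  have hx0 : 0 ≤ x := by positivity
  have hxru : x ≤ r * u := div_le_self (by positivity) (by linarith)
  have hpgf : succPoissonPgf r (1 + u)⁻¹ = (1 + u)⁻¹ * exp (-x) := by
    rw [succPoissonPgf, hx]
    congr 2
    field_simp
    ring
  have hinv : (1 + (1 + r) * u)⁻¹ = (1 + u)⁻¹ * (1 + x)⁻¹ := by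
    rw [← mul_inv, hx]
    congr 1
    field_simp
    ring
  rw [hpgf, hinv, ← mul_sub, abs_mul, abs_of_pos (by positivity)]
  calc (1 + u)⁻¹ * |exp (-x) - (1 + x)⁻¹| ≤ 1 * (x ^ 2 / 2) :=
        mul_le_mul (inv_le_one_of_one_le₀ (by linarith)) (abs_exp_neg_sub_inv_one_add_le hx0)
          (abs_nonneg _) zero_le_one
    _ ≤ (r * u) ^ 2 / 2 := by rw [one_mul]; gcongr

theorem abs_iterate_comp_div_pow_sub_le {S : Set ℝ} {f φ ψ : ℝ → ℝ} {c A B δ : ℝ} (hc : 0 < c)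
    (hfS : MapsTo f S S) (hf : ∀ a ∈ S, ∀ b ∈ S, |f a - f b| ≤ c * |a - b|)
    (hφS : ∀ θ > 0, φ θ ∈ S) (hψS : ∀ θ > 0, ψ θ ∈ S)
    (hφ : ∀ θ > 0, |f (φ (θ / c)) - φ θ| ≤ δ * θ ^ 2)
    (hψ : ∀ θ > 0, |ψ θ - φ θ| ≤ A * θ ^ 2) (hB : 0 ≤ B) (hBδ : B / c + δ ≤ B) (n : ℕ) :
    ∀ θ > 0, |f^[n] (ψ (θ / c ^ n)) - φ θ| ≤ (A / c ^ n + B) * θ ^ 2 := by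
  induction n with
  | zero =>
    intro θ hθ
    simpa using (hψ θ hθ).trans (by nlinarith [sq_nonneg θ])
  | succ n ih =>
    intro θ hθ
    have hθc : 0 < θ / c := div_pos hθ hc
    have hS : f^[n] (ψ (θ / c / c ^ n)) ∈ S := hfS.iterate n (hψS _ (by positivity))
    rw [pow_succ', ← div_div, Function.iterate_succ_apply']
    calc |f (f^[n] (ψ (θ / c / c ^ n))) - φ θ|
        ≤ |f (f^[n] (ψ (θ / c / c ^ n))) - f (φ (θ / c))| + |f (φ (θ / c)) - φ θ| :=
          abs_sub_le _ _ _
      _ ≤ c * ((A / c ^ n + B) * (θ / c) ^ 2) + δ * θ ^ 2 := by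
          gcongr
          · exact (hf _ hS _ (hφS _ hθc)).trans (by gcongr; exact ih _ hθc)
          · exact hφ θ hθ
      _ = (A / (c * c ^ n) + (B / c + δ)) * θ ^ 2 := by field_simp; ring
      _ ≤ (A / (c * c ^ n) + B) * θ ^ 2 := by gcongr

theorem abs_iterate_succPoissonPgf_exp_neg_sub_le {r θ : ℝ} (hr : 0 ≤ r) (hθ : 0 < θ) (n : ℕ) :
    |(succPoissonPgf r)^[n] (exp (-(θ / (1 + r) ^ n))) - (1 + θ)⁻¹| ≤
      (1 / 2 / (1 + r) ^ n + r / (2 * (1 + r))) * θ ^ 2 := by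
  have hc : 0 < 1 + r := by linarith
  -- `r / (2 * (1 + r))` is the fixed point of `A ↦ A / (1 + r) + r ^ 2 / (2 * (1 + r) ^ 2)`.
  refine abs_iterate_comp_div_pow_sub_le (S := Icc 0 1) (ψ := fun θ => exp (-θ))
    (φ := fun θ => (1 + θ)⁻¹) (δ := r ^ 2 / (2 * (1 + r) ^ 2)) hc (mapsTo_succPoissonPgf_Icc hr)
    (fun a ha b hb => abs_succPoissonPgf_sub_le hr ha hb) (fun θ hθ => ?_) (fun θ hθ => ?_)
    (fun θ hθ => ?_) (fun θ hθ => ?_) (by positivity) (le_of_eq (by field_simp)) n θ hθ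
  · exact ⟨by positivity, inv_le_one_of_one_le₀ (by linarith)⟩
  · exact ⟨(exp_pos _).le, exp_le_one_iff.2 (by linarith)⟩
  · have h := abs_succPoissonPgf_inv_one_add_sub_le hr (div_pos hθ hc).le
    rw [mul_div_cancel₀ θ hc.ne'] at h
    exact h.trans_eq (by field_simp)
  · exact (abs_exp_neg_sub_inv_one_add_le hθ.le).trans_eq (by ring)

section Poisson

set_option linter.deprecated false

theorem lintegral_ofReal_pow_map_succ_poissonPMF (r : ℝ≥0) {u : ℝ} (hu : 0 ≤ u) :
    ∫⁻ k, ENNReal.ofReal u ^ k ∂((poissonPMF r).map (· + 1)).toMeasure =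
      ENNReal.ofReal (succPoissonPgf r u) := by
  have hseries :
      HasSum (fun k : ℕ => u * exp (-r) * ((r * u) ^ k / k.factorial)) (succPoissonPgf r u) := by
    have h := (NormedSpace.expSeries_div_hasSum_exp (r * u : ℝ)).mul_left (u * exp (-r))
    rwa [← congr_fun exp_eq_exp_ℝ, mul_assoc, ← exp_add,
      show -(r : ℝ) + r * u = r * (u - 1) by ring] at h
  have hterm : ∀ k : ℕ, ENNReal.ofReal u ^ (k + 1) * (poissonPMF r).toMeasure {k} =
      ENNReal.ofReal (u * exp (-r) * ((r * u) ^ k / k.factorial)) := by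
    intro k
    rw [PMF.toMeasure_apply_singleton _ _ (measurableSet_singleton k),
      ← poissonPMFReal_ofReal_eq_poissonPMF, ← ENNReal.ofReal_pow hu,
      ← ENNReal.ofReal_mul (by positivity), poissonPMFReal]
    congr 1
    ring
  rw [← PMF.toMeasure_map _ _ .of_discrete, lintegral_map .of_discrete .of_discrete,
    lintegral_countable', tsum_congr hterm,
    ← ENNReal.ofReal_tsum_of_nonneg (fun k => by positivity) hseries.summable, hseries.tsum_eq]

theorem lintegral_ofReal_pow_of_map_eq_succ_poissonPMF {Ω : Type*} [MeasurableSpace Ω]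
    {μ : Measure Ω} {Z : Ω → ℕ} {r u : ℝ} (hZ : Measurable Z)
    (hlaw : μ.map Z = ((poissonPMF r.toNNReal).map (· + 1)).toMeasure) (hr : 0 ≤ r)
    (hu : 0 ≤ u) : ∫⁻ ω, ENNReal.ofReal u ^ Z ω ∂μ = ENNReal.ofReal (succPoissonPgf r u) := by
  rw [← lintegral_map .of_discrete hZ, hlaw, lintegral_ofReal_pow_map_succ_poissonPMF _ hu,
    Real.coe_toNNReal _ hr]

end Poisson

theorem lintegral_pow_sum_range_eq_lintegral_pow {Ω : Type*} [MeasurableSpace Ω]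
    {μ : Measure Ω} {N : Ω → ℕ} {Y : ℕ → Ω → ℕ} {u g : ℝ≥0∞}
    (hN : Measurable N) (hY : ∀ i, Measurable (Y i)) (hY_indep : iIndepFun Y μ)
    (hNY : IndepFun N (fun ω i => Y i ω) μ) (hYg : ∀ i, ∫⁻ ω, u ^ Y i ω ∂μ = g) :
    ∫⁻ ω, u ^ (∑ i ∈ Finset.range (N ω), Y i ω) ∂μ = ∫⁻ ω, g ^ N ω ∂μ := by
  have := hY_indep.isProbabilityMeasure
  have hYseq : Measurable fun ω i => Y i ω := measurable_pi_lambda _ hY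
  set F : ℕ × (ℕ → ℕ) → ℝ≥0∞ := fun p => ∏ i ∈ Finset.range p.1, u ^ p.2 i
  have hF : Measurable F := measurable_from_prod_countable_right fun m =>
    Finset.measurable_prod (Finset.range m) fun i _ => measurable_const.pow (measurable_pi_apply i)
  have hinner : ∀ m, ∫⁻ y, F (m, y) ∂(μ.map fun ω i => Y i ω) = g ^ m := by
    intro m
    rw [lintegral_map (f := fun y => F (m, y)) (hF.comp measurable_prodMk_left) hYseq]
    simp only [F]
    rw [lintegral_prod_eq_prod_lintegral_of_indepFun _ (fun i ω => u ^ Y i ω)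
      (hY_indep.comp (fun _ k => u ^ k) fun _ => .of_discrete)
      (fun i => Measurable.of_discrete.comp (hY i))]
    simp [hYg]
  calc ∫⁻ ω, u ^ (∑ i ∈ Finset.range (N ω), Y i ω) ∂μ = ∫⁻ ω, F (N ω, fun i => Y i ω) ∂μ := by
        simp only [F, Finset.prod_pow_eq_pow_sum]
    _ = ∫⁻ p, F p ∂(μ.map fun ω => (N ω, fun i => Y i ω)) :=
        (lintegral_map hF (hN.prodMk hYseq)).symm
    _ = ∫⁻ m, ∫⁻ y, F (m, y) ∂(μ.map fun ω i => Y i ω) ∂(μ.map N) := by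
        rw [(indepFun_iff_map_prod_eq_prod_map_map hN.aemeasurable hYseq.aemeasurable).1 hNY,
          lintegral_prod _ hF.aemeasurable]
    _ = ∫⁻ ω, g ^ N ω ∂μ := by
        simp_rw [hinner]
        exact lintegral_map .of_discrete hN

theorem Measurable.apply_index {Ω ι β : Type*} {m : MeasurableSpace Ω} [MeasurableSpace ι]
    [Countable ι] [MeasurableSingletonClass ι] [MeasurableSpace β] {N : Ω → ι} {Z : ι → Ω → β}
    (hN : Measurable N) (hZ : ∀ k, Measurable (Z k)) : Measurable fun ω => Z (N ω) ω :=
  (measurable_from_prod_countable_right (f := fun p : ι × Ω => Z p.1 p.2) hZ).comp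
    (hN.prodMk measurable_id)

section GaltonWatson

variable {Ω : Type*} {X : ℕ → ℕ → Ω → ℕ} {M : ℕ → Ω → ℕ}

abbrev offspringSigma (X : ℕ → ℕ → Ω → ℕ) (S : Set (ℕ × ℕ)) : MeasurableSpace Ω :=
  ⨆ p ∈ S, MeasurableSpace.comap (X p.1 p.2) inferInstance

theorem measurable_offspringSigma {S : Set (ℕ × ℕ)} {n i : ℕ} (h : (n, i) ∈ S) :
    Measurable[offspringSigma X S] (X n i) :=
  Measurable.of_comap_le (le_biSup (fun p : ℕ × ℕ => MeasurableSpace.comap (X p.1 p.2) _) h)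

theorem measurable_generation_offspringSigma (hM0 : ∀ ω, M 0 ω = 1)
    (hMrec : ∀ n ω, M (n + 1) ω = ∑ i ∈ Finset.range (M n ω), X n i ω) (n : ℕ) :
    Measurable[offspringSigma X {p | p.1 < n}] (M n) := by
  induction n with
  | zero => simpa only [funext hM0] using measurable_const
  | succ n ih =>
    have hmono : offspringSigma X {p | p.1 < n} ≤ offspringSigma X {p | p.1 < n + 1} :=
      biSup_mono fun p hp => Nat.lt_succ_of_lt hp
    rw [funext (hMrec n)]
    exact (ih.mono hmono le_rfl).apply_index (Z := fun k ω => ∑ i ∈ Finset.range k, X n i ω)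
      fun k => Finset.measurable_sum _ fun i _ => measurable_offspringSigma n.lt_succ_self

variable [MeasurableSpace Ω] {μ : Measure Ω}

theorem measurable_generation (hXm : ∀ n i, Measurable (X n i)) (hM0 : ∀ ω, M 0 ω = 1)
    (hMrec : ∀ n ω, M (n + 1) ω = ∑ i ∈ Finset.range (M n ω), X n i ω) (n : ℕ) :
    Measurable (M n) :=
  (measurable_generation_offspringSigma hM0 hMrec n).mono
    (iSup₂_le fun p _ => (hXm p.1 p.2).comap_le) le_rfl

theorem indepFun_generation_offspring (hXm : ∀ n i, Measurable (X n i))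
    (hindep : iIndepFun (fun p : ℕ × ℕ => X p.1 p.2) μ) (hM0 : ∀ ω, M 0 ω = 1)
    (hMrec : ∀ n ω, M (n + 1) ω = ∑ i ∈ Finset.range (M n ω), X n i ω) (n : ℕ) :
    IndepFun (M n) (fun ω i => X n i ω) μ := by
  have hsplit : Indep (offspringSigma X {p | p.1 < n}) (offspringSigma X {p | p.1 = n}) μ := by
    refine indep_iSup_of_disjoint (fun p => ?_) hindep.iIndep ?_
    · exact (hXm p.1 p.2).comap_le
    · exact Set.disjoint_left.2 fun p hlt heq => (ne_of_lt hlt) heq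
  have hoffspring : Measurable[offspringSigma X {p | p.1 = n}] fun ω i => X n i ω :=
    @measurable_pi_lambda _ _ _ (offspringSigma X {p | p.1 = n}) _ _ fun i =>
      measurable_offspringSigma (show n = n from rfl)
  rw [IndepFun_iff_Indep]
  exact indep_of_indep_of_le hsplit
    (measurable_iff_comap_le.1 (measurable_generation_offspringSigma hM0 hMrec n))
    (measurable_iff_comap_le.1 hoffspring)

theorem lintegral_ofReal_pow_generation {G : ℝ → ℝ} (hG : MapsTo G (Ici 0) (Ici 0))
    (hXm : ∀ n i, Measurable (X n i)) (hindep : iIndepFun (fun p : ℕ × ℕ => X p.1 p.2) μ)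
    (hXG : ∀ n i, ∀ u ≥ 0, ∫⁻ ω, ENNReal.ofReal u ^ X n i ω ∂μ = ENNReal.ofReal (G u))
    (hM0 : ∀ ω, M 0 ω = 1)
    (hMrec : ∀ n ω, M (n + 1) ω = ∑ i ∈ Finset.range (M n ω), X n i ω) (n : ℕ) {u : ℝ}
    (hu : 0 ≤ u) : ∫⁻ ω, ENNReal.ofReal u ^ M n ω ∂μ = ENNReal.ofReal (G^[n] u) := by
  have := hindep.isProbabilityMeasure
  induction n generalizing u with
  | zero => simp [hM0]
  | succ n ih =>
    simp_rw [hMrec n]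
    rw [lintegral_pow_sum_range_eq_lintegral_pow (measurable_generation hXm hM0 hMrec n) (hXm n)
      (hindep.precomp (g := Prod.mk n) (Prod.mk_right_injective n))
      (indepFun_generation_offspring hXm hindep hM0 hMrec n) (fun i => hXG n i u hu), ih (hG hu),
      Function.iterate_succ_apply]

theorem integral_pow_generation {G : ℝ → ℝ} (hG : MapsTo G (Ici 0) (Ici 0))
    (hXm : ∀ n i, Measurable (X n i)) (hindep : iIndepFun (fun p : ℕ × ℕ => X p.1 p.2) μ)
    (hXG : ∀ n i, ∀ u ≥ 0, ∫⁻ ω, ENNReal.ofReal u ^ X n i ω ∂μ = ENNReal.ofReal (G u))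
    (hM0 : ∀ ω, M 0 ω = 1)
    (hMrec : ∀ n ω, M (n + 1) ω = ∑ i ∈ Finset.range (M n ω), X n i ω) (n : ℕ) {u : ℝ}
    (hu : 0 ≤ u) : ∫ ω, u ^ M n ω ∂μ = G^[n] u := by
  rw [integral_eq_lintegral_of_nonneg_ae (ae_of_all _ fun ω => pow_nonneg hu _)
    (Measurable.of_discrete.comp (measurable_generation hXm hM0 hMrec n)).aestronglyMeasurable]
  simp_rw [ENNReal.ofReal_pow hu]
  rw [lintegral_ofReal_pow_generation hG hXm hindep hXG hM0 hMrec n hu,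
    ENNReal.toReal_ofReal (hG.iterate n hu)]

end GaltonWatson

theorem tendsto_div_pow_add_mul {c : ℝ} (hc : 1 < c) (A B t : ℝ) :
    Tendsto (fun n : ℕ => (A / c ^ n + B) * t) atTop (𝓝 (B * t)) := by
  simpa using ((tendsto_const_nhds.div_atTop (tendsto_pow_atTop_atTop_of_one_lt hc)).add_const
    B).mul_const t

theorem tendsto_integral_exp_neg_mul_of_ae_tendsto {Ω : Type*} [MeasurableSpace Ω]
    {μ : Measure Ω} [IsFiniteMeasure μ] {Y : ℕ → Ω → ℝ} {W : Ω → ℝ} {θ : ℝ} (hθ : 0 ≤ θ)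
    (hYm : ∀ n, AEMeasurable (Y n) μ) (hY : ∀ n, ∀ᵐ ω ∂μ, 0 ≤ Y n ω)
    (hlim : ∀ᵐ ω ∂μ, Tendsto (fun n => Y n ω) atTop (𝓝 (W ω))) :
    Tendsto (fun n => ∫ ω, exp (-θ * Y n ω) ∂μ) atTop (𝓝 (∫ ω, exp (-θ * W ω) ∂μ)) := by
  refine tendsto_integral_of_dominated_convergence (fun _ => 1)
    (fun n => (measurable_exp.comp_aemeasurable ((hYm n).const_mul _)).aestronglyMeasurable)
    (integrable_const 1) (fun n => (hY n).mono fun ω hω => ?_)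
    (hlim.mono fun ω hω => (continuous_exp.tendsto _).comp (hω.const_mul (-θ)))
  rw [norm_of_nonneg (exp_pos _).le, exp_le_one_iff, neg_mul]
  exact neg_nonpos.2 (mul_nonneg hθ hω)

theorem gw_limit_laplace_close_to_exp_general (Ω : Type*) [MeasurableSpace Ω] (μ : Measure Ω)
    [IsProbabilityMeasure μ] (ρ : ℝ) (hρ : 0 < ρ)
    (X : ℕ → ℕ → Ω → ℕ) (M : ℕ → Ω → ℕ)
    (hXm : ∀ n i, Measurable (X n i))
    (hindep : iIndepFun (fun p : ℕ × ℕ => X p.1 p.2) μ)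
    (hXd : ∀ n i, μ.map (X n i) =
      ((poissonPMF (2 * ρ).toNNReal).map (· + 1)).toMeasure)
    (hM0 : ∀ ω, M 0 ω = 1)
    (hMrec : ∀ n ω, M (n + 1) ω = ∑ i ∈ Finset.range (M n ω), X n i ω)
    (W : Ω → ℝ)
    (hWlim : ∀ᵐ ω ∂μ, Filter.Tendsto
      (fun n => ((1 + 2 * ρ) ^ n)⁻¹ * (M n ω : ℝ)) Filter.atTop (nhds (W ω))) :
    ∀ θ > 0, |(∫ ω, Real.exp (-θ * W ω) ∂μ) - (1 + θ)⁻¹| ≤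
      ρ / (1 + 2 * ρ) * θ ^ 2 := by
  intro θ hθ
  have hpgf : ∀ n i, ∀ u ≥ 0, ∫⁻ ω, ENNReal.ofReal u ^ X n i ω ∂μ =
      ENNReal.ofReal (succPoissonPgf (2 * ρ) u) := fun n i _ hu =>
    lintegral_ofReal_pow_of_map_eq_succ_poissonPMF (hXm n i) (hXd n i) (by positivity) hu
  have hvalue : ∀ n, ∫ ω, exp (-θ * (((1 + 2 * ρ) ^ n)⁻¹ * M n ω)) ∂μ =
      (succPoissonPgf (2 * ρ))^[n] (exp (-(θ / (1 + 2 * ρ) ^ n))) := fun n => by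
    rw [← integral_pow_generation (mapsTo_succPoissonPgf_Ici _) hXm hindep hpgf hM0 hMrec n
      (exp_pos _).le]
    congr 1 with ω
    rw [← exp_nat_mul]
    congr 1
    ring
  have hlim := tendsto_integral_exp_neg_mul_of_ae_tendsto
    (Y := fun n ω => ((1 + 2 * ρ) ^ n)⁻¹ * M n ω) hθ.le
    (fun n => (Measurable.of_discrete.comp (measurable_generation hXm hM0 hMrec n)).aemeasurable
      |>.const_mul _)
    (fun n => ae_of_all _ fun ω => by positivity) hWlim
  refine le_of_tendsto_of_tendsto' ((hlim.sub_const _).abs)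
    (tendsto_div_pow_add_mul (c := 1 + 2 * ρ) (by linarith) (1 / 2) _ _) fun n => ?_
  rw [hvalue n]
  simpa only [mul_div_mul_left ρ (1 + 2 * ρ) two_ne_zero] using
    abs_iterate_succPoissonPgf_exp_neg_sub_le (r := 2 * ρ) (by positivity) hθ n

/-- The Laplace transform `φ_ρ(θ) = E[e^{-θ W_ρ}]` of the martingale limit
`W_ρ` of the Galton–Watson process with offspring `1 + Poisson(2ρ)` satisfies
`sup_{θ>0} θ⁻²|φ_ρ(θ) - (1+θ)⁻¹| ≤ ρ/(1+2ρ)`, stated pointwise. -/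
theorem gw_limit_laplace_close_to_exp (Ω : Type*) [MeasurableSpace Ω] (μ : Measure Ω)
    [IsProbabilityMeasure μ] (ρ : ℝ) (hρ : 0 < ρ)
    (X : ℕ → ℕ → Ω → ℕ) (M : ℕ → Ω → ℕ)
    (hXm : ∀ n i, Measurable (X n i))
    (hindep : iIndepFun (fun p : ℕ × ℕ => X p.1 p.2) μ)
    (hXd : ∀ n i, μ.map (X n i) =
      ((poissonPMF (2 * ρ).toNNReal).map (· + 1)).toMeasure)
    (hM0 : ∀ ω, M 0 ω = 1)
    (hMrec : ∀ n ω, M (n + 1) ω = ∑ i ∈ Finset.range (M n ω), X n i ω)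
    (W : Ω → ℝ) (hWm : Measurable W)
    (hWlim : ∀ᵐ ω ∂μ, Filter.Tendsto
      (fun n => ((1 + 2 * ρ) ^ n)⁻¹ * (M n ω : ℝ)) Filter.atTop (nhds (W ω))) :
    ∀ θ > 0, |(∫ ω, Real.exp (-θ * W ω) ∂μ) - (1 + θ)⁻¹| ≤
      ρ / (1 + 2 * ρ) * θ ^ 2 :=
  gw_limit_laplace_close_to_exp_general Ω μ ρ hρ X M hXm hindep hXd hM0 hMrec W hWlim
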